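/- arXiv:1709.09778 — 6 statements merged into one kernel-verified Lean document; each statement's English description precedes it below -/
import Mathlib

section
/- Privacy amplification by subsampling without replacement: Let X be a set, Y an output set, and let P be a randomized mechanism taking ℓ-tuples over X to probability distributions on Y that is ε-differentially private with ε ≥ 0. For n ≥ ℓ ≥ 1 define the mechanism M on n-tuples S over X by: choose uniformly at random an injective map ι from {1,…,ℓ} into {1,…,n} (i.e., sample ℓ of the n entries uniformly at random without replacement) and output a draw from P(S∘ι). Then M is log(1 + (ℓ/n)(e^ε − 1))-differentially private; that is, for every pair of n-tuples S, S' differing in exactly one coordinate and every set E of outputs, Pr[M(S) ∈ E] ≤ (1 + (ℓ/n)(e^ε − 1)) · Pr[M(S') ∈ E]. -/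
/-- Two tuples are adjacent if they differ in exactly one coordinate. -/
def Adjacent {X : Type*} {m : ℕ} (S S' : Fin m → X) : Prop :=
  ∃ j : Fin m, S j ≠ S' j ∧ ∀ i : Fin m, i ≠ j → S i = S' i

open Classical in
noncomputable def swapEmb {ℓ n : ℕ} (ι : Fin ℓ ↪ Fin n) (i : Fin ℓ) (k : Fin n) :
    Fin ℓ ↪ Fin n :=
  if h : Function.Injective (Function.update (⇑ι) i k) then ⟨_, h⟩ else ι

lemma update_inj {ℓ n : ℕ} (ι : Fin ℓ ↪ Fin n) (i : Fin ℓ) (k : Fin n)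
    (hk : ∀ i', ι i' ≠ k) : Function.Injective (Function.update (⇑ι) i k) := by
  intro a b hab
  by_cases ha : a = i <;> by_cases hb : b = i
  · rw [ha, hb]
  · rw [ha, Function.update_self, Function.update_of_ne hb] at hab
    exact absurd hab.symm (hk b)
  · rw [hb, Function.update_self, Function.update_of_ne ha] at hab
    exact absurd hab (hk a)
  · rw [Function.update_of_ne ha, Function.update_of_ne hb] at hab
    exact ι.injective hab

lemma swapEmb_coe {ℓ n : ℕ} (ι : Fin ℓ ↪ Fin n) (i : Fin ℓ) (k : Fin n)
    (hk : ∀ i', ι i' ≠ k) : ⇑(swapEmb ι i k) = Function.update (⇑ι) i k := by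
  rw [swapEmb, dif_pos (update_inj ι i k hk)]; rfl

/-- The preimage of `j` under an embedding (junk value if `j` is not in the range). -/
noncomputable def preOf {ℓ n : ℕ} [Nonempty (Fin ℓ)] (ι : Fin ℓ ↪ Fin n) (j : Fin n) :
    Fin ℓ :=
  Function.invFun ⇑ι j

lemma preOf_spec {ℓ n : ℕ} [Nonempty (Fin ℓ)] {ι : Fin ℓ ↪ Fin n} {j : Fin n}
    (h : ∃ i, ι i = j) : ι (preOf ι j) = j :=
  Function.invFun_eq h

lemma preOf_eq {ℓ n : ℕ} [Nonempty (Fin ℓ)] {ι : Fin ℓ ↪ Fin n} {j : Fin n} {a : Fin ℓ}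
    (ha : ι a = j) : preOf ι j = a :=
  ι.injective (by rw [preOf_spec ⟨a, ha⟩, ha])

/-- Privacy amplification by subsampling without replacement: if `P` is an
`ε`-differentially private mechanism on `ℓ`-tuples, then the mechanism `M` that
samples `ℓ` of the `n` entries of its input uniformly at random without
replacement (i.e. via a uniformly random injection `Fin ℓ ↪ Fin n`) and runs
`P` on the subsample is `log (1 + (ℓ/n)(e^ε − 1))`-differentially private. -/
theorem subsampling_without_replacement_boosts_privacy
    {X Y : Type*} {n ℓ : ℕ} (hℓ : 1 ≤ ℓ) (hn : ℓ ≤ n)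
    (ε : ℝ) (hε : 0 ≤ ε)
    (P : (Fin ℓ → X) → PMF Y)
    (hP : ∀ T T' : Fin ℓ → X, Adjacent T T' → ∀ E : Set Y,
      (P T).toOuterMeasure E ≤ ENNReal.ofReal (Real.exp ε) * (P T').toOuterMeasure E)
    [Nonempty (Fin ℓ ↪ Fin n)]
    (M : (Fin n → X) → PMF Y)
    (hM : ∀ S : Fin n → X,
      M S = (PMF.uniformOfFintype (Fin ℓ ↪ Fin n)).bind (fun ι => P (S ∘ ι)))
    (S S' : Fin n → X) (hSS' : Adjacent S S') (E : Set Y) :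
    (M S).toOuterMeasure E ≤
      ENNReal.ofReal (1 + ((ℓ : ℝ) / (n : ℝ)) * (Real.exp ε - 1)) *
        (M S').toOuterMeasure E := by
  classical
  obtain ⟨j, hjne, hjeq⟩ := hSS'
  haveI : Nonempty (Fin ℓ) := ⟨⟨0, hℓ⟩⟩
  have hn0 : 0 < n := lt_of_lt_of_le hℓ hn
  set Eε := ENNReal.ofReal (Real.exp ε) with hEεdef
  set D := ENNReal.ofReal (Real.exp ε - 1) with hDdef
  have hexp1 : (1 : ℝ) ≤ Real.exp ε := Real.one_le_exp hε
  have hEεD : Eε = 1 + D := by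
    rw [hEεdef, hDdef, ← ENNReal.ofReal_one,
      ← ENNReal.ofReal_add zero_le_one (by linarith)]
    norm_num
  have hone : (1 : ENNReal) ≤ Eε := by
    rw [hEεdef, ← ENNReal.ofReal_one]
    exact ENNReal.ofReal_le_ofReal hexp1
  set f : (Fin ℓ ↪ Fin n) → ENNReal := fun ι => (P (S ∘ ⇑ι)).toOuterMeasure E with hfdef
  set g : (Fin ℓ ↪ Fin n) → ENNReal := fun ι => (P (S' ∘ ⇑ι)).toOuterMeasure E with hgdef
  -- DP for tuples differing in at most one coordinate
  have dp : ∀ (T T' : Fin ℓ → X) (i0 : Fin ℓ), (∀ i, i ≠ i0 → T i = T' i) →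
      (P T).toOuterMeasure E ≤ Eε * (P T').toOuterMeasure E := by
    intro T T' i0 h
    by_cases h0 : T i0 = T' i0
    · have hTT : T = T' := funext fun i => by
        by_cases hi : i = i0
        · rw [hi]; exact h0
        · exact h i hi
      rw [hTT]
      exact le_mul_of_one_le_left (zero_le) hone
    · exact hP T T' ⟨i0, h0, h⟩ E
  -- rewrite the mechanism outputs
  have hMrw : ∀ (T : Fin n → X),
      (M T).toOuterMeasure E = (↑(Fintype.card (Fin ℓ ↪ Fin n)))⁻¹ *
        ∑ ι : Fin ℓ ↪ Fin n, (P (T ∘ ⇑ι)).toOuterMeasure E := by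
    intro T
    rw [hM T, PMF.toOuterMeasure_bind_apply, tsum_fintype]
    simp_rw [PMF.uniformOfFintype_apply]
    rw [← Finset.mul_sum]
  rw [hMrw S, hMrw S']
  set c := ENNReal.ofReal (1 + ((ℓ : ℝ) / (n : ℝ)) * (Real.exp ε - 1)) with hcdef
  suffices key : ∑ ι : Fin ℓ ↪ Fin n, f ι ≤ c * ∑ ι : Fin ℓ ↪ Fin n, g ι by
    calc (↑(Fintype.card (Fin ℓ ↪ Fin n)))⁻¹ * ∑ ι : Fin ℓ ↪ Fin n, f ι
        ≤ (↑(Fintype.card (Fin ℓ ↪ Fin n)))⁻¹ * (c * ∑ ι : Fin ℓ ↪ Fin n, g ι) :=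
          mul_le_mul_right key _
      _ = c * ((↑(Fintype.card (Fin ℓ ↪ Fin n)))⁻¹ * ∑ ι : Fin ℓ ↪ Fin n, g ι) := by
          ring
  -- it suffices to prove the inequality multiplied by n
  have hnR : (n : ℝ) ≠ 0 := Nat.cast_ne_zero.mpr hn0.ne'
  have hcn : (n : ENNReal) * c = (n : ENNReal) + (ℓ : ENNReal) * D := by
    have h2 : (n : ENNReal) * c = ENNReal.ofReal ((n : ℝ) + (ℓ : ℝ) * (Real.exp ε - 1)) := by
      rw [hcdef, ← ENNReal.ofReal_natCast n, ← ENNReal.ofReal_mul (by positivity)]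
      congr 1
      field_simp
    have h3 : (n : ENNReal) + (ℓ : ENNReal) * D
        = ENNReal.ofReal ((n : ℝ) + (ℓ : ℝ) * (Real.exp ε - 1)) := by
      rw [ENNReal.ofReal_add (by positivity)
          (mul_nonneg (by positivity) (by linarith)), ENNReal.ofReal_natCast,
        ENNReal.ofReal_mul (by positivity), ENNReal.ofReal_natCast, hDdef]
    rw [h2, h3]
  have hnne : (n : ENNReal) ≠ 0 := Nat.cast_ne_zero.mpr hn0.ne'
  have hntop : (n : ENNReal) ≠ ⊤ := ENNReal.natCast_ne_top n
  rw [← ENNReal.mul_le_mul_iff_right hnne hntop, ← mul_assoc, hcn]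
  -- split the sums according to whether j is in the range
  set p : (Fin ℓ ↪ Fin n) → Prop := fun ι => ∃ i, ι i = j with hpdef
  rw [← Finset.sum_filter_add_sum_filter_not Finset.univ p f,
    ← Finset.sum_filter_add_sum_filter_not Finset.univ p g]
  set Ff := ∑ ι ∈ Finset.univ.filter p, f ι with hFf
  set Fc := ∑ ι ∈ Finset.univ.filter (fun ι => ¬ p ι), f ι with hFc
  set Gf := ∑ ι ∈ Finset.univ.filter p, g ι with hGf
  set Gc := ∑ ι ∈ Finset.univ.filter (fun ι => ¬ p ι), g ι with hGc
  have hFcGc : Fc = Gc := by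
    refine Finset.sum_congr rfl fun ι hι => ?_
    have hno : ¬ p ι := (Finset.mem_filter.mp hι).2
    have : S ∘ ⇑ι = S' ∘ ⇑ι := funext fun i => hjeq (ι i) fun h => hno ⟨i, h⟩
    simp only [hfdef, hgdef, this]
  -- the two per-part inequalities
  have I1 : Ff ≤ Eε * Gf := by
    rw [hFf, hGf, Finset.mul_sum]
    refine Finset.sum_le_sum fun ι hι => ?_
    have hpι : p ι := (Finset.mem_filter.mp hι).2
    have hι0 : ι (preOf ι j) = j := preOf_spec hpι
    refine dp _ _ (preOf ι j) fun i hi => ?_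
    have : ι i ≠ j := fun h => hi (ι.injective (h.trans hι0.symm))
    exact hjeq (ι i) this
  have I2 : ((n - ℓ : ℕ) : ENNReal) * Ff ≤ Eε * ((ℓ : ENNReal) * Gc) := by
    -- per-element: (n-ℓ) * f ι ≤ Eε * ∑ over k outside range
    have perι : ∀ ι ∈ Finset.univ.filter p,
        ((n - ℓ : ℕ) : ENNReal) * f ι ≤
          Eε * ∑ k ∈ (Finset.univ.image ⇑ι)ᶜ, g (swapEmb ι (preOf ι j) k) := by
      intro ι hι
      have hpι : p ι := (Finset.mem_filter.mp hι).2
      have hι0 : ι (preOf ι j) = j := preOf_spec hpι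
      have hcard : ((Finset.univ.image ⇑ι)ᶜ).card = n - ℓ := by
        rw [Finset.card_compl, Finset.card_image_of_injective _ ι.injective,
          Finset.card_univ, Fintype.card_fin, Fintype.card_fin]
      have hterm : ∀ k ∈ (Finset.univ.image ⇑ι)ᶜ,
          f ι ≤ Eε * g (swapEmb ι (preOf ι j) k) := by
        intro k hk
        have hknot : ∀ i', ι i' ≠ k := by
          intro i' h
          exact (Finset.mem_compl.mp hk) (Finset.mem_image.mpr ⟨i', Finset.mem_univ _, h⟩)
        have hco := swapEmb_coe ι (preOf ι j) k hknot
        refine dp _ _ (preOf ι j) fun i hi => ?_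
        have hιij : ι i ≠ j := fun h => hi (ι.injective (h.trans hι0.symm))
        show S (ι i) = S' (swapEmb ι (preOf ι j) k i)
        rw [hco, Function.update_of_ne hi]
        exact hjeq (ι i) hιij
      calc ((n - ℓ : ℕ) : ENNReal) * f ι
          = ∑ _k ∈ (Finset.univ.image ⇑ι)ᶜ, f ι := by
            rw [Finset.sum_const, hcard, nsmul_eq_mul]
        _ ≤ ∑ k ∈ (Finset.univ.image ⇑ι)ᶜ, Eε * g (swapEmb ι (preOf ι j) k) :=
            Finset.sum_le_sum hterm
        _ = Eε * ∑ k ∈ (Finset.univ.image ⇑ι)ᶜ, g (swapEmb ι (preOf ι j) k) := by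
            rw [Finset.mul_sum]
    -- double counting
    have hdc : ∑ ι ∈ Finset.univ.filter p,
        ∑ k ∈ (Finset.univ.image ⇑ι)ᶜ, g (swapEmb ι (preOf ι j) k)
        = (ℓ : ENNReal) * Gc := by
      rw [hGc]
      rw [Finset.sum_sigma' (Finset.univ.filter p)
        (fun ι => (Finset.univ.image ⇑ι)ᶜ)
        (fun ι k => g (swapEmb ι (preOf ι j) k))]
      have hprod : (ℓ : ENNReal) * ∑ ι ∈ Finset.univ.filter (fun ι => ¬ p ι), g ι
          = ∑ q ∈ (Finset.univ.filter (fun ι => ¬ p ι)) ×ˢ (Finset.univ : Finset (Fin ℓ)),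
              g q.1 := by
        rw [Finset.sum_product]
        simp [Finset.sum_const, Finset.mul_sum, mul_comm]
      rw [hprod]
      refine Finset.sum_bij'
        (fun x hx => (swapEmb x.1 (preOf x.1 j) x.2, preOf x.1 j))
        (fun q hq => ⟨swapEmb q.1 q.2 j, q.1 q.2⟩) ?_ ?_ ?_ ?_ ?_
      · -- maps into the product
        rintro ⟨ι, k⟩ hx
        obtain ⟨hι, hk⟩ := Finset.mem_sigma.mp hx
        have hpι : p ι := (Finset.mem_filter.mp hι).2
        have hι0 : ι (preOf ι j) = j := preOf_spec hpι
        have hknot : ∀ i', ι i' ≠ k := by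
          intro i' h
          exact (Finset.mem_compl.mp hk) (Finset.mem_image.mpr ⟨i', Finset.mem_univ _, h⟩)
        have hco := swapEmb_coe ι (preOf ι j) k hknot
        refine Finset.mem_product.mpr ⟨Finset.mem_filter.mpr ⟨Finset.mem_univ _, ?_⟩,
          Finset.mem_univ _⟩
        rintro ⟨i, hi⟩
        rw [hco] at hi
        by_cases h : i = preOf ι j
        · rw [h, Function.update_self] at hi
          exact hknot (preOf ι j) (hι0.trans hi.symm)
        · rw [Function.update_of_ne h] at hi
          exact h (ι.injective (hi.trans hι0.symm))
      · -- inverse maps into the sigma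
        rintro ⟨ι', i⟩ hq
        obtain ⟨hι', -⟩ := Finset.mem_product.mp hq
        have hno : ¬ p ι' := (Finset.mem_filter.mp hι').2
        have hjnot : ∀ i', ι' i' ≠ j := fun i' h => hno ⟨i', h⟩
        have hco := swapEmb_coe ι' i j hjnot
        refine Finset.mem_sigma.mpr ⟨Finset.mem_filter.mpr ⟨Finset.mem_univ _, ?_⟩, ?_⟩
        · exact ⟨i, by rw [hco, Function.update_self]⟩
        · refine Finset.mem_compl.mpr fun hmem => ?_
          obtain ⟨i'', -, hi''⟩ := Finset.mem_image.mp hmem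
          rw [hco] at hi''
          by_cases h : i'' = i
          · rw [h, Function.update_self] at hi''
            exact hjnot i hi''.symm
          · rw [Function.update_of_ne h] at hi''
            exact h (ι'.injective hi'')
      · -- left inverse
        rintro ⟨ι, k⟩ hx
        obtain ⟨hι, hk⟩ := Finset.mem_sigma.mp hx
        have hpι : p ι := (Finset.mem_filter.mp hι).2
        have hι0 : ι (preOf ι j) = j := preOf_spec hpι
        have hknot : ∀ i', ι i' ≠ k := by
          intro i' h
          exact (Finset.mem_compl.mp hk) (Finset.mem_image.mpr ⟨i', Finset.mem_univ _, h⟩)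
        have hco := swapEmb_coe ι (preOf ι j) k hknot
        set σ := swapEmb ι (preOf ι j) k with hσ
        have hσnotj : ∀ i', σ i' ≠ j := by
          intro i' hi'
          rw [hσ, hco] at hi'
          by_cases h : i' = preOf ι j
          · rw [h, Function.update_self] at hi'
            exact hknot (preOf ι j) (hι0.trans hi'.symm)
          · rw [Function.update_of_ne h] at hi'
            exact h (ι.injective (hi'.trans hι0.symm))
        have hco2 := swapEmb_coe σ (preOf ι j) j hσnotj
        have hupd : Function.update (⇑ι) (preOf ι j) j = ⇑ι := funext fun a => by
          rcases eq_or_ne a (preOf ι j) with rfl | ha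
          · rw [Function.update_self, hι0]
          · rw [Function.update_of_ne ha]
        have h1 : swapEmb σ (preOf ι j) j = ι := by
          refine DFunLike.coe_injective ?_
          show ⇑(swapEmb σ (preOf ι j) j) = ⇑ι
          rw [hco2, hco, Function.update_idem, hupd]
        have h2 : σ (preOf ι j) = k := by
          rw [hσ, hco, Function.update_self]
        show (⟨swapEmb σ (preOf ι j) j, σ (preOf ι j)⟩ :
            Σ _ : Fin ℓ ↪ Fin n, Fin n) = ⟨ι, k⟩
        rw [h1, h2]
      · -- right inverse
        rintro ⟨ι', i⟩ hq
        obtain ⟨hι', -⟩ := Finset.mem_product.mp hq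
        have hno : ¬ p ι' := (Finset.mem_filter.mp hι').2
        have hjnot : ∀ i', ι' i' ≠ j := fun i' h => hno ⟨i', h⟩
        have hco := swapEmb_coe ι' i j hjnot
        set σ := swapEmb ι' i j with hσ
        have hσi : σ i = j := by rw [hσ, hco, Function.update_self]
        have hpre : preOf σ j = i := preOf_eq hσi
        have hσnot : ∀ i', σ i' ≠ ι' i := by
          intro i' hi'
          rw [hσ, hco] at hi'
          by_cases h : i' = i
          · rw [h, Function.update_self] at hi'
            exact hjnot i hi'.symm
          · rw [Function.update_of_ne h] at hi'
            exact h (ι'.injective hi')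
        have hco2 := swapEmb_coe σ i (ι' i) hσnot
        have h1 : swapEmb σ (preOf σ j) (ι' i) = ι' := by
          rw [hpre]
          refine DFunLike.coe_injective ?_
          show ⇑(swapEmb σ i (ι' i)) = ⇑ι'
          rw [hco2, hco, Function.update_idem, Function.update_eq_self]
        show (swapEmb σ (preOf σ j) (ι' i), preOf σ j) = (ι', i)
        rw [h1, hpre]
      · intro x hx
        rfl
    calc ((n - ℓ : ℕ) : ENNReal) * Ff
        = ∑ ι ∈ Finset.univ.filter p, ((n - ℓ : ℕ) : ENNReal) * f ι := by
          rw [hFf, Finset.mul_sum]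
      _ ≤ ∑ ι ∈ Finset.univ.filter p,
            Eε * ∑ k ∈ (Finset.univ.image ⇑ι)ᶜ, g (swapEmb ι (preOf ι j) k) :=
          Finset.sum_le_sum perι
      _ = Eε * ∑ ι ∈ Finset.univ.filter p,
            ∑ k ∈ (Finset.univ.image ⇑ι)ᶜ, g (swapEmb ι (preOf ι j) k) := by
          rw [Finset.mul_sum]
      _ = Eε * ((ℓ : ENNReal) * Gc) := by rw [hdc]
  -- combine everything
  have hEεne : Eε ≠ 0 := by
    intro h
    rw [h] at hone
    simp at hone
  have hEεtop : Eε ≠ ⊤ := ENNReal.ofReal_ne_top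
  have hnsplit : (n : ENNReal) = (ℓ : ENNReal) + ((n - ℓ : ℕ) : ENNReal) := by
    rw [← Nat.cast_add, Nat.add_sub_cancel' hn]
  have hKey : (n : ENNReal) * Ff ≤ ((n : ENNReal) + (ℓ : ENNReal) * D) * Gf
      + (ℓ : ENNReal) * D * Gc := by
    rw [← ENNReal.mul_le_mul_iff_right hEεne hEεtop]
    calc Eε * ((n : ENNReal) * Ff)
        = ((n : ENNReal) + (ℓ : ENNReal) * D) * Ff
            + D * (((n - ℓ : ℕ) : ENNReal) * Ff) := by
          rw [hEεD, hnsplit]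
          ring
      _ ≤ ((n : ENNReal) + (ℓ : ENNReal) * D) * (Eε * Gf)
            + D * (Eε * ((ℓ : ENNReal) * Gc)) :=
          add_le_add (mul_le_mul_right I1 _) (mul_le_mul_right I2 _)
      _ = Eε * (((n : ENNReal) + (ℓ : ENNReal) * D) * Gf + (ℓ : ENNReal) * D * Gc) := by
          ring
  calc (n : ENNReal) * (Ff + Fc)
      = (n : ENNReal) * Ff + (n : ENNReal) * Gc := by rw [hFcGc]; ring
    _ ≤ (((n : ENNReal) + (ℓ : ENNReal) * D) * Gf + (ℓ : ENNReal) * D * Gc)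
        + (n : ENNReal) * Gc := add_le_add_left hKey _
    _ = ((n : ENNReal) + (ℓ : ENNReal) * D) * (Gf + Gc) := by ring
end

section
/- For all real ε with 0 ≤ ε ≤ 1 and all natural numbers ℓ, n with ℓ ≥ 1 and n ≥ 1, one has log(1 + (1 − (1 − 1/n)^ℓ)(e^ε − 1)) ≤ 2(ℓ/n)ε. -/
/-- The privacy parameter `log (1 + (1 − (1 − 1/n)^ℓ)(e^ε − 1))` obtained from
subsampling with replacement is at most `2(ℓ/n)ε` whenever `0 ≤ ε ≤ 1`,
`ℓ ≥ 1` and `n ≥ 1`. -/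
theorem log_subsample_with_replacement_le
    (ε : ℝ) (hε0 : 0 ≤ ε) (hε1 : ε ≤ 1) (ℓ n : ℕ) (hℓ : 1 ≤ ℓ) (hn : 1 ≤ n) :
    Real.log (1 + (1 - (1 - 1 / (n : ℝ)) ^ ℓ) * (Real.exp ε - 1)) ≤
      2 * ((ℓ : ℝ) / (n : ℝ)) * ε := by
  have hn0 : (0:ℝ) < n := by exact_mod_cast hn
  have hinv0 : (0:ℝ) ≤ 1 / n := by positivity
  have hinv1 : (1:ℝ) / n ≤ 1 := by
    rw [div_le_one hn0]; exact_mod_cast hn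
  -- p := 1 - (1-1/n)^ℓ
  set q : ℝ := (1 - 1 / (n:ℝ)) ^ ℓ with hq
  have hq0 : 0 ≤ q := pow_nonneg (by linarith) ℓ
  have hq1 : q ≤ 1 := pow_le_one₀ (by linarith) (by linarith)
  have hp0 : 0 ≤ 1 - q := by linarith
  -- Bernoulli: 1 - ℓ/n ≤ q
  have hbern : 1 + (ℓ:ℝ) * (-(1/n)) ≤ (1 + (-(1/n))) ^ ℓ :=
    one_add_mul_le_pow (by linarith) ℓ
  have hpln : 1 - q ≤ (ℓ:ℝ) / n := by
    have : (1 + (-(1/(n:ℝ)))) ^ ℓ = q := by rw [hq]; ring_nf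
    rw [this] at hbern
    have : (ℓ:ℝ) / n = (ℓ:ℝ) * (1/n) := by ring
    rw [this]; nlinarith
  have he0 : 0 ≤ Real.exp ε - 1 := by
    have := Real.one_le_exp hε0; linarith
  -- exp ε - 1 ≤ 2ε by convexity
  have hconv := convexOn_exp.2 (Set.mem_univ (0:ℝ)) (Set.mem_univ (1:ℝ))
    (by linarith : (0:ℝ) ≤ 1 - ε) hε0 (by ring : (1 - ε) + ε = 1)
  simp only [smul_eq_mul, mul_zero, mul_one, add_zero, zero_add, Real.exp_zero] at hconv
  have he2 : Real.exp ε - 1 ≤ 2 * ε := by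
    have hexp1 : Real.exp 1 ≤ 3 := by
      have := Real.exp_one_lt_d9; linarith
    nlinarith
  have hpos : 0 < 1 + (1 - q) * (Real.exp ε - 1) := by nlinarith
  have hlog : Real.log (1 + (1 - q) * (Real.exp ε - 1)) ≤ (1 - q) * (Real.exp ε - 1) := by
    have := Real.log_le_sub_one_of_pos hpos
    linarith
  have hmul : (1 - q) * (Real.exp ε - 1) ≤ ((ℓ:ℝ)/n) * (2 * ε) :=
    mul_le_mul hpln he2 he0 (by positivity)
  calc Real.log (1 + (1 - q) * (Real.exp ε - 1)) ≤ (1 - q) * (Real.exp ε - 1) := hlog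
    _ ≤ ((ℓ:ℝ)/n) * (2 * ε) := hmul
    _ = 2 * ((ℓ:ℝ)/n) * ε := by ring
end

section
/- Privacy of the sampling-counting-query mechanism: Let X be a set, q : X → {0,1}, and for an n-tuple S over X let i(S) denote the number of coordinates j with q(S_j) = 1. Let 0 < α ≤ 1/2 and 0 < ε ≤ 1, and suppose n ≥ 1/(αε). Define the mechanism M_q that on input S outputs 1 with probability p(S) = ((1−α)·i(S) + α·(n − i(S)))/n and outputs 0 with probability 1 − p(S) (equivalently: sample a uniformly random coordinate s of S and output q(s) with probability 1−α and 1−q(s) with probability α). Then M_q is ε-differentially private: for every pair of n-tuples S, S' differing in exactly one coordinate, p(S) ≤ e^ε · p(S') and 1 − p(S) ≤ e^ε · (1 − p(S')). -/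
/-- `countOnes q S` is the number of coordinates `j` with `q (S j) = 1`
(where the `{0,1}`-valued query `q` is modelled as a `Bool`-valued function). -/
def countOnes {X : Type*} {m : ℕ} (q : X → Bool) (S : Fin m → X) : ℕ :=
  (Finset.univ.filter fun j : Fin m => q (S j) = true).card

lemma countOnes_adj_le {X : Type*} {m : ℕ} (q : X → Bool) (j : Fin m)
    (T T' : Fin m → X) (h : ∀ i : Fin m, i ≠ j → T i = T' i) :
    countOnes q T ≤ countOnes q T' + 1 := by
  have hsub : (Finset.univ.filter fun i : Fin m => q (T i) = true) ⊆
      insert j (Finset.univ.filter fun i : Fin m => q (T' i) = true) := by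
    intro i hi
    simp only [Finset.mem_filter, Finset.mem_insert, Finset.mem_univ, true_and] at *
    by_cases hij : i = j
    · exact Or.inl hij
    · exact Or.inr (by rw [← h i hij]; exact hi)
  calc countOnes q T ≤ _ := Finset.card_le_card hsub
    _ ≤ _ + 1 := Finset.card_insert_le _ _

lemma countOnes_le {X : Type*} {m : ℕ} (q : X → Bool) (T : Fin m → X) :
    countOnes q T ≤ m := by
  simpa [countOnes] using Finset.card_filter_le Finset.univ (fun i : Fin m => q (T i) = true)

/-- Privacy of the sampling-counting-query mechanism: the mechanism that on
input `S` outputs `1` with probability `p S = ((1−α)·i(S) + α·(n−i(S)))/n`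
(and `0` otherwise) is `ε`-differentially private provided `0 < α ≤ 1/2`,
`0 < ε ≤ 1` and `n ≥ 1/(αε)`. -/
theorem scq_mechanism_private
    {X : Type*} {n : ℕ} (q : X → Bool)
    (α ε : ℝ) (hα0 : 0 < α) (hα : α ≤ 1 / 2) (hε0 : 0 < ε) (hε : ε ≤ 1)
    (hn : 1 / (α * ε) ≤ (n : ℝ))
    (p : (Fin n → X) → ℝ)
    (hp : ∀ S : Fin n → X,
      p S = ((1 - α) * (countOnes q S : ℝ) + α * ((n : ℝ) - (countOnes q S : ℝ))) / n)
    (S S' : Fin n → X) (hSS' : Adjacent S S') :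
    p S ≤ Real.exp ε * p S' ∧ 1 - p S ≤ Real.exp ε * (1 - p S') := by
  obtain ⟨j, _, hij⟩ := hSS'
  rw [hp S, hp S']
  have hab1 : (countOnes q S : ℝ) ≤ (countOnes q S' : ℝ) + 1 := by
    exact_mod_cast countOnes_adj_le q j S S' hij
  have hab2 : (countOnes q S' : ℝ) ≤ (countOnes q S : ℝ) + 1 := by
    exact_mod_cast countOnes_adj_le q j S' S (fun i hi => (hij i hi).symm)
  have han : (countOnes q S : ℝ) ≤ n := by exact_mod_cast countOnes_le q S
  have hbn : (countOnes q S' : ℝ) ≤ n := by exact_mod_cast countOnes_le q S'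
  have ha0 : (0:ℝ) ≤ countOnes q S := Nat.cast_nonneg _
  have hb0 : (0:ℝ) ≤ countOnes q S' := Nat.cast_nonneg _
  set a : ℝ := (countOnes q S : ℝ)
  set b : ℝ := (countOnes q S' : ℝ)
  have hnpos : (0:ℝ) < n := by
    have : (0:ℝ) < 1 / (α * ε) := by positivity
    linarith
  have hmul : 1 ≤ α * ε * n := by
    rw [div_le_iff₀ (by positivity)] at hn
    linarith [hn]
  set E := Real.exp ε with hEdef
  have hE : 1 + ε ≤ E := by
    have := Real.add_one_le_exp ε
    linarith
  have hne : (n:ℝ) ≠ 0 := ne_of_gt hnpos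
  set L : ℝ := (1 - α) * a + α * ((n:ℝ) - a) with hL
  set R : ℝ := (1 - α) * b + α * ((n:ℝ) - b) with hR
  have hRnn : 0 ≤ R := by nlinarith
  have hnRnn : 0 ≤ (n:ℝ) - R := by nlinarith
  have h12 : (0:ℝ) ≤ 1 - 2 * α := by linarith
  have core1 : L ≤ E * R := by
    have k1 : (1 - 2*α) * a ≤ (1 - 2*α) * (b + 1) := mul_le_mul_of_nonneg_left hab1 h12
    have k2 : 0 ≤ ε * (1 - 2*α) * b := mul_nonneg (mul_nonneg hε0.le h12) hb0
    have h1 : L ≤ (1 + ε) * R := by nlinarith [k1, k2, hmul]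
    have h2 : (1 + ε) * R ≤ E * R := mul_le_mul_of_nonneg_right hE hRnn
    linarith
  have core2 : (n:ℝ) - L ≤ E * ((n:ℝ) - R) := by
    have k1 : (1 - 2*α) * b ≤ (1 - 2*α) * (a + 1) := mul_le_mul_of_nonneg_left hab2 h12
    have k2 : 0 ≤ ε * (1 - 2*α) * ((n:ℝ) - b) :=
      mul_nonneg (mul_nonneg hε0.le h12) (by linarith)
    have h1 : (n:ℝ) - L ≤ (1 + ε) * ((n:ℝ) - R) := by nlinarith [k1, k2, hmul]
    have h2 : (1 + ε) * ((n:ℝ) - R) ≤ E * ((n:ℝ) - R) :=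
      mul_le_mul_of_nonneg_right hE hnRnn
    linarith
  constructor
  · rw [← mul_div_assoc]
    exact (div_le_div_iff_of_pos_right hnpos).mpr core1
  · have e1 : 1 - L / n = ((n:ℝ) - L) / n := by field_simp
    have e2 : 1 - R / n = ((n:ℝ) - R) / n := by field_simp
    rw [e1, e2, ← mul_div_assoc]
    exact (div_le_div_iff_of_pos_right hnpos).mpr core2
end

section
/- Privacy of the Laplace mechanism: Let Δ > 0, ε > 0, and b = Δ/ε. For c ∈ ℝ let μ_c be the probability measure on ℝ with density x ↦ (1/(2b))·exp(−|x − c|/b) with respect to Lebesgue measure (i.e., Lap(b) noise added to c). Then for all c, c' ∈ ℝ with |c − c'| ≤ Δ and every measurable set A ⊆ ℝ, μ_c(A) ≤ e^ε · μ_{c'}(A). -/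
open MeasureTheory

/-- Privacy of the Laplace mechanism: let `b = Δ/ε` and let `μ c` be the
Laplace distribution with scale `b` centred at `c` (the law of `c` plus
`Lap(b)` noise).  Then for any two centres at distance at most `Δ` and any
measurable set `A`, `μ c A ≤ e^ε · μ c' A`. -/
theorem laplace_mechanism_private
    (Δ ε : ℝ) (hΔ : 0 < Δ) (hε : 0 < ε) (b : ℝ) (hb : b = Δ / ε)
    (μ : ℝ → Measure ℝ)
    (hμ : ∀ c : ℝ, μ c = volume.withDensity
      (fun x : ℝ => ENNReal.ofReal (1 / (2 * b) * Real.exp (-|x - c| / b))))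
    (c c' : ℝ) (hcc' : |c - c'| ≤ Δ) (A : Set ℝ) (hA : MeasurableSet A) :
    μ c A ≤ ENNReal.ofReal (Real.exp ε) * μ c' A := by
  have hbpos : 0 < b := hb ▸ div_pos hΔ hε
  rw [hμ c, hμ c', withDensity_apply _ hA, withDensity_apply _ hA,
    ← lintegral_const_mul' _ _ ENNReal.ofReal_ne_top]
  refine lintegral_mono fun x => ?_
  rw [← ENNReal.ofReal_mul (Real.exp_pos ε).le]
  refine ENNReal.ofReal_le_ofReal ?_
  rw [← mul_assoc, mul_comm (Real.exp ε), mul_assoc, ← Real.exp_add]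
  refine mul_le_mul_of_nonneg_left (Real.exp_le_exp.2 ?_) (by positivity)
  have h1 : |x - c'| - |c - c'| ≤ |x - c| := by
    have := abs_sub_abs_le_abs_sub (x - c') (c - c')
    rw [show x - c' - (c - c') = x - c from by ring] at this
    exact this
  have hεb : ε * b = Δ := by
    rw [hb, mul_div_cancel₀ _ hε.ne']
  have key : -|x - c| ≤ ε * b + -|x - c'| := by nlinarith [hbpos, hcc']
  calc -|x - c| / b ≤ (ε * b + -|x - c'|) / b := by
        exact div_le_div_of_nonneg_right key hbpos.le |>.trans_eq rfl
    _ = ε + -|x - c'| / b := by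
        rw [add_div, mul_div_cancel_right₀ _ hbpos.ne']
end

section
/- Accuracy of the exponential mechanism: Let R be a finite nonempty set, f : R → ℝ a function, and η > 0. Define a random variable X on R by Pr[X = r] = e^{η f(r)}/C, where C = Σ_{r∈R} e^{η f(r)}. Then E[f(X)] ≥ max_{r∈R} f(r) − (1/η)·log|R|. -/
/-- Accuracy of the exponential mechanism: if `X` takes value `r ∈ R` with
probability `e^{η f(r)} / Σ_{r'} e^{η f(r')}`, then the expected utility
`E[f(X)] = Σ_r f(r)·e^{η f(r)}/C` is at least
`max_{r∈R} f(r) − (1/η)·log |R|`. -/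
theorem exponential_mechanism_accuracy
    {R : Type*} [Fintype R] [Nonempty R] (f : R → ℝ) (η : ℝ) (hη : 0 < η) :
    (⨆ r : R, f r) - (1 / η) * Real.log (Fintype.card R) ≤
      ∑ r : R, f r * (Real.exp (η * f r) / ∑ r' : R, Real.exp (η * f r')) := by
  set C : ℝ := ∑ r' : R, Real.exp (η * f r') with hCdef
  have hC : 0 < C := Finset.sum_pos (fun r _ => Real.exp_pos _) Finset.univ_nonempty
  set p : R → ℝ := fun r => Real.exp (η * f r) / C with hpdef
  have hp : ∀ r, 0 < p r := fun r => div_pos (Real.exp_pos _) hC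
  have hpsum : ∑ r : R, p r = 1 := by
    simp only [hpdef]
    rw [← Finset.sum_div, div_self hC.ne']
  have hlog : ∀ r, Real.log (p r) = η * f r - Real.log C := by
    intro r
    rw [hpdef]
    rw [Real.log_div (Real.exp_pos _).ne' hC.ne', Real.log_exp]
  set n : ℝ := (Fintype.card R : ℝ) with hndef
  have hn : 0 < n := by
    simp only [hndef]
    exact_mod_cast Fintype.card_pos
  -- entropy bound: ∑ p log p ≥ -log n
  have hent : -(Real.log n) ≤ ∑ r : R, p r * Real.log (p r) := by
    have hpt : ∀ r ∈ Finset.univ, p r - 1 / n - p r * Real.log n ≤ p r * Real.log (p r) := by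
      intro r _
      have h1 : Real.log (1 / (n * p r)) ≤ 1 / (n * p r) - 1 :=
        Real.log_le_sub_one_of_pos (by positivity)
      have h2 : Real.log (1 / (n * p r)) = -(Real.log n) - Real.log (p r) := by
        rw [Real.log_div one_ne_zero (by positivity), Real.log_one,
          Real.log_mul hn.ne' (hp r).ne']
        ring
      have h3 : (-(Real.log n) - Real.log (p r)) * p r ≤ (1 / (n * p r) - 1) * p r := by
        have := mul_le_mul_of_nonneg_right (h2 ▸ h1) (hp r).le
        linarith
      have h4 : (1 / (n * p r)) * p r = 1 / n := by
        field_simp; exact mul_inv_cancel₀ (hp r).ne'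
      nlinarith [h3, h4]
    have hsum := Finset.sum_le_sum hpt
    have : ∑ r : R, (p r - 1 / n - p r * Real.log n) = -(Real.log n) := by
      rw [Finset.sum_sub_distrib, Finset.sum_sub_distrib, hpsum, ← Finset.sum_mul, hpsum,
        Finset.sum_const, Finset.card_univ, nsmul_eq_mul]
      have : (Fintype.card R : ℝ) * (1 / n) = 1 := by
        rw [hndef]; field_simp
      rw [this]; ring
    linarith [this ▸ hsum]
  -- log C ≥ η * sup f
  have hsup : η * (⨆ r : R, f r) ≤ Real.log C := by
    obtain ⟨r0, hr0⟩ := Finite.exists_max f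
    have h1 : (⨆ r : R, f r) ≤ f r0 := ciSup_le hr0
    have h2 : Real.exp (η * f r0) ≤ C :=
      Finset.single_le_sum (f := fun r => Real.exp (η * f r)) (fun r _ => (Real.exp_pos _).le) (Finset.mem_univ r0)
    have h3 : η * f r0 ≤ Real.log C := (Real.le_log_iff_exp_le hC).mpr h2
    nlinarith
  -- expected utility identity
  have hid : η * (∑ r : R, f r * p r) = Real.log C + ∑ r : R, p r * Real.log (p r) := by
    rw [Finset.mul_sum]
    have : ∀ r ∈ Finset.univ, η * (f r * p r) = p r * Real.log (p r) + Real.log C * p r := by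
      intro r _
      rw [hlog r]; ring
    rw [Finset.sum_congr rfl this, Finset.sum_add_distrib, ← Finset.mul_sum, hpsum]
    ring
  have hmain : η * ((⨆ r : R, f r) - (1 / η) * Real.log n) ≤ η * (∑ r : R, f r * p r) := by
    have : η * ((⨆ r : R, f r) - (1 / η) * Real.log n)
        = η * (⨆ r : R, f r) - Real.log n := by
      field_simp
    rw [this, hid]
    linarith
  exact le_of_mul_le_mul_left hmain hη
end

section
/- Accuracy on the sample of the subsample-and-add-Laplace-noise mechanism for a single statistical query: Let X be a set, S an n-tuple over X, q : X → [0,1], ℓ ≥ 1, ε' > 0, and 0 < α ≤ 1. Let I_1, …, I_ℓ be independent uniformly random indices in {1,…,n}, let Z be an independent draw from the Laplace distribution Lap(1/(ℓε')), and let a = (1/ℓ)·Σ_{j=1}^ℓ q(S_{I_j}) + Z. Then Pr[|a − q(S)| ≥ α] ≤ 2·exp(−α²ℓ/2) + exp(−αε'ℓ/2), where q(S) = (1/n)·Σ_{j=1}^n q(S_j). -/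
open MeasureTheory

open Real Set Filter

lemma Dpos {m : ℝ} (hm0 : 0 ≤ m) (hm1 : m ≤ 1) (t : ℝ) :
    0 < 1 - m + m * Real.exp t := by
  rcases lt_or_eq_of_le hm1 with h | h
  · nlinarith [Real.exp_pos t, mul_nonneg hm0 (Real.exp_pos t).le]
  · subst h; simpa using Real.exp_pos t

lemma hoeffding_aux {m : ℝ} (hm0 : 0 ≤ m) (hm1 : m ≤ 1) (t : ℝ) :
    Real.exp (-t * m) * (1 - m + m * Real.exp t) ≤ Real.exp (t ^ 2 / 8) := by
  set D : ℝ → ℝ := fun t => 1 - m + m * Real.exp t with hD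
  have hDpos : ∀ t, 0 < D t := fun t => Dpos hm0 hm1 t
  set g : ℝ → ℝ := fun t => t ^ 2 / 8 + t * m - Real.log (D t) with hg
  set g' : ℝ → ℝ := fun t => t / 4 + m - m * Real.exp t / D t with hg'
  have hDderiv : ∀ t, HasDerivAt D (m * Real.exp t) t := by
    intro t
    exact ((Real.hasDerivAt_exp t).const_mul m).const_add (1 - m)
  have hgderiv : ∀ t, HasDerivAt g (g' t) t := by
    intro t
    have h1 : HasDerivAt (fun t : ℝ => t ^ 2 / 8 + t * m) (t / 4 + m) t := by
      have := ((hasDerivAt_pow 2 t).div_const 8).add ((hasDerivAt_id t).mul_const m)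
      exact this.congr_deriv (by ring)
    have h2 : HasDerivAt (fun t => Real.log (D t)) (m * Real.exp t / D t) t :=
      (hDderiv t).log (hDpos t).ne'
    exact h1.sub h2
  have hg'deriv : ∀ t, HasDerivAt g'
      (1 / 4 - (m * Real.exp t / D t) * (1 - m * Real.exp t / D t)) t := by
    intro t
    have h1 : HasDerivAt (fun t : ℝ => t / 4 + m) (1 / 4) t := by
      simpa using ((hasDerivAt_id t).div_const 4).add_const m
    have h2 : HasDerivAt (fun t => m * Real.exp t / D t)
        ((m * Real.exp t * D t - m * Real.exp t * (m * Real.exp t)) / (D t) ^ 2) t :=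
      ((Real.hasDerivAt_exp t).const_mul m).div (hDderiv t) (hDpos t).ne'
    have heq : (m * Real.exp t * D t - m * Real.exp t * (m * Real.exp t)) / (D t) ^ 2
        = (m * Real.exp t / D t) * (1 - m * Real.exp t / D t) := by
      have hne : D t ≠ 0 := (hDpos t).ne'
      field_simp
    rw [heq] at h2
    exact h1.sub h2
  have hg'mono : Monotone g' := by
    apply monotone_of_deriv_nonneg
    · exact fun t => (hg'deriv t).differentiableAt
    · intro t
      rw [(hg'deriv t).deriv]
      nlinarith [sq_nonneg (m * Real.exp t / D t - 1 / 2)]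
  have hg'0 : g' 0 = 0 := by
    simp [hg', hD]
  have hg0 : g 0 = 0 := by
    simp [hg, hD]
  have key : ∀ t, 0 ≤ g t := by
    intro t
    rcases le_or_gt 0 t with ht | ht
    · have : MonotoneOn g (Ici 0) := by
        apply monotoneOn_of_deriv_nonneg (convex_Ici 0)
          (Continuous.continuousOn (by
            have : Differentiable ℝ g := fun t => (hgderiv t).differentiableAt
            exact this.continuous))
          (fun t _ => (hgderiv t).differentiableAt.differentiableWithinAt)
        intro x hx
        rw [(hgderiv x).deriv]
        rw [interior_Ici] at hx
        have := hg'mono (le_of_lt hx)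
        rwa [hg'0] at this
      have := this (self_mem_Ici) (ht) ht
      rwa [hg0] at this
    · have : AntitoneOn g (Iic 0) := by
        apply antitoneOn_of_deriv_nonpos (convex_Iic 0)
          (Continuous.continuousOn (by
            have : Differentiable ℝ g := fun t => (hgderiv t).differentiableAt
            exact this.continuous))
          (fun t _ => (hgderiv t).differentiableAt.differentiableWithinAt)
        intro x hx
        rw [(hgderiv x).deriv]
        rw [interior_Iic] at hx
        have := hg'mono (le_of_lt hx)
        rwa [hg'0] at this
      have := this (le_of_lt ht : t ≤ 0) (self_mem_Iic) (le_of_lt ht)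
      rwa [hg0] at this
  have h := key t
  have hlog : Real.log (D t) ≤ t ^ 2 / 8 + t * m := by
    simp only [hg] at h; linarith
  calc Real.exp (-t * m) * (1 - m + m * Real.exp t)
      = Real.exp (-t * m) * D t := rfl
    _ ≤ Real.exp (-t * m) * Real.exp (t ^ 2 / 8 + t * m) := by
        apply mul_le_mul_of_nonneg_left _ (Real.exp_pos _).le
        calc D t = Real.exp (Real.log (D t)) := (Real.exp_log (hDpos t)).symm
          _ ≤ _ := Real.exp_le_exp.2 hlog
    _ = Real.exp (t ^ 2 / 8) := by rw [← Real.exp_add]; ring_nf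

lemma convex_exp_bound {y : ℝ} (hy0 : 0 ≤ y) (hy1 : y ≤ 1) (t : ℝ) :
    Real.exp (t * y) ≤ (1 - y) + y * Real.exp t := by
  have h := convexOn_exp.2 (Set.mem_univ (0 : ℝ)) (Set.mem_univ t)
    (by linarith : (0:ℝ) ≤ 1 - y) hy0 (by ring)
  simpa [smul_eq_mul, mul_comm] using h

lemma mgf_le {n : ℕ} [NeZero n] (f : Fin n → ℝ) (hf : ∀ i, f i ∈ Set.Icc (0:ℝ) 1) (t : ℝ) :
    ∑ i, Real.exp (t * (f i - (∑ i, f i) / n)) ≤ n * Real.exp (t ^ 2 / 8) := by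
  have hn : (0:ℝ) < n := by exact_mod_cast Nat.pos_of_ne_zero (NeZero.ne n)
  set m : ℝ := (∑ i, f i) / n with hm
  have hs0 : 0 ≤ ∑ i, f i := Finset.sum_nonneg fun i _ => (hf i).1
  have hs1 : ∑ i, f i ≤ n := by
    calc ∑ i, f i ≤ ∑ _i : Fin n, (1:ℝ) := Finset.sum_le_sum fun i _ => (hf i).2
      _ = n := by simp
  have hm0 : 0 ≤ m := by rw [hm]; positivity
  have hm1 : m ≤ 1 := by rw [hm, div_le_one hn]; exact hs1
  have step : ∀ i, Real.exp (t * (f i - m))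
      ≤ Real.exp (-t * m) * ((1 - f i) + f i * Real.exp t) := by
    intro i
    have h0 : Real.exp (t * (f i - m)) = Real.exp (-t * m) * Real.exp (t * f i) := by
      rw [← Real.exp_add]; ring_nf
    rw [h0]
    exact mul_le_mul_of_nonneg_left (convex_exp_bound (hf i).1 (hf i).2 t) (Real.exp_pos _).le
  calc ∑ i, Real.exp (t * (f i - m))
      ≤ ∑ i, Real.exp (-t * m) * ((1 - f i) + f i * Real.exp t) :=
        Finset.sum_le_sum fun i _ => step i
    _ = Real.exp (-t * m) * ((n : ℝ) - (∑ i, f i) + (∑ i, f i) * Real.exp t) := by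
        rw [← Finset.mul_sum]
        congr 1
        rw [Finset.sum_add_distrib, Finset.sum_sub_distrib, ← Finset.sum_mul]
        simp
    _ = n * (Real.exp (-t * m) * (1 - m + m * Real.exp t)) := by
        have h1 : (∑ i, f i) = n * m := by rw [hm]; field_simp
        rw [h1]; ring
    _ ≤ n * Real.exp (t ^ 2 / 8) :=
        mul_le_mul_of_nonneg_left (hoeffding_aux hm0 hm1 t) hn.le

set_option maxHeartbeats 1000000 in
lemma chernoff_one_sided {n ℓ : ℕ} [NeZero n] (f : Fin n → ℝ)
    (hf : ∀ i, f i ∈ Set.Icc (0:ℝ) 1) (s t : ℝ) (ht : 0 ≤ t) :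
    (PMF.uniformOfFintype (Fin ℓ → Fin n)).toMeasure
      {p : Fin ℓ → Fin n | s ≤ (∑ j, f (p j)) / ℓ - (∑ i, f i) / n}
    ≤ ENNReal.ofReal (Real.exp ((ℓ:ℝ) * (t ^ 2 / 8) - t * ℓ * s)) := by
  classical
  have hn : (0:ℝ) < n := by exact_mod_cast Nat.pos_of_ne_zero (NeZero.ne n)
  set m : ℝ := (∑ i, f i) / n with hm
  set E : Set (Fin ℓ → Fin n) := {p | s ≤ (∑ j, f (p j)) / ℓ - m} with hE
  set w : (Fin ℓ → Fin n) → ℝ :=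
    fun p => (1 / (n:ℝ) ^ ℓ) * Real.exp (t * ((∑ j, f (p j)) - ℓ * (m + s))) with hw
  have hwnn : ∀ p, 0 ≤ w p := fun p => by rw [hw]; positivity
  have hcard : (Fintype.card (Fin ℓ → Fin n)) = n ^ ℓ := by simp
  have hconv : (Fintype.card (Fin ℓ → Fin n) : ENNReal)⁻¹
      = ENNReal.ofReal (1 / (n:ℝ) ^ ℓ) := by
    rw [hcard, ← ENNReal.ofReal_natCast (n ^ ℓ),
      ← ENNReal.ofReal_inv_of_pos (by exact_mod_cast pow_pos hn ℓ)]
    congr 1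
    push_cast
    rw [one_div]
  have hupper : ∀ p, E.indicator (⇑(PMF.uniformOfFintype (Fin ℓ → Fin n))) p
      ≤ ENNReal.ofReal (w p) := by
    intro p
    by_cases hp : p ∈ E
    · rw [Set.indicator_of_mem hp, PMF.uniformOfFintype_apply, hconv]
      apply ENNReal.ofReal_le_ofReal
      rw [hw]
      have hexp : (1:ℝ) ≤ Real.exp (t * ((∑ j, f (p j)) - ℓ * (m + s))) := by
        rw [← Real.exp_zero]
        apply Real.exp_le_exp.2
        rcases Nat.eq_zero_or_pos ℓ with h0 | hpos
        · subst h0; simp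
        · have hl : (0:ℝ) < ℓ := by exact_mod_cast hpos
          have hmem := hp
          rw [hE, Set.mem_setOf_eq, le_sub_iff_add_le] at hmem
          have h2 : (s + m) * ℓ ≤ ∑ j, f (p j) := (le_div_iff₀ hl).1 hmem
          have h3 : (0:ℝ) ≤ (∑ j, f (p j)) - ℓ * (m + s) := by nlinarith
          exact mul_nonneg ht h3
      nlinarith [hexp, (by positivity : (0:ℝ) < (1:ℝ)/(n:ℝ)^ℓ)]
    · rw [Set.indicator_of_notMem hp]; exact zero_le
  have hEmeas : MeasurableSet E := MeasurableSet.of_discrete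
  have hbd : (∑ i, Real.exp (t * (f i - m))) / n ≤ Real.exp (t ^ 2 / 8) := by
    rw [div_le_iff₀ hn]
    have h := mgf_le f hf t
    rw [← hm] at h
    linarith
  have hprodsum : ∑ p : Fin ℓ → Fin n, ∏ j, Real.exp (t * (f (p j) - m))
      = (∑ i, Real.exp (t * (f i - m))) ^ ℓ := by
    have h := Finset.sum_prod_piFinset (ι := Fin ℓ) Finset.univ
      (fun _ i => Real.exp (t * (f i - m)))
    rw [Fintype.piFinset_univ] at h
    rw [h]
    simp [Finset.prod_const]
  have hsplit : ∀ p : Fin ℓ → Fin n, w p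
      = (1 / (n:ℝ) ^ ℓ) * ((∏ j, Real.exp (t * (f (p j) - m)))
        * Real.exp (-(t * ℓ * s))) := by
    intro p
    simp only [hw]
    rw [← Real.exp_sum, ← Real.exp_add]
    congr 2
    have h1 : ∑ j : Fin ℓ, t * (f (p j) - m) = t * (∑ j, f (p j)) - ℓ * (t * m) := by
      simp only [mul_sub, Finset.sum_sub_distrib, ← Finset.mul_sum, Finset.sum_const,
        Finset.card_univ, Fintype.card_fin, nsmul_eq_mul]
      ring
    rw [h1]
    ring
  calc (PMF.uniformOfFintype (Fin ℓ → Fin n)).toMeasure E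
      = ∑ p, E.indicator (⇑(PMF.uniformOfFintype (Fin ℓ → Fin n))) p :=
        PMF.toMeasure_apply_fintype _ E
    _ ≤ ∑ p, ENNReal.ofReal (w p) := Finset.sum_le_sum fun p _ => hupper p
    _ = ENNReal.ofReal (∑ p, w p) := (ENNReal.ofReal_sum_of_nonneg fun p _ => hwnn p).symm
    _ ≤ ENNReal.ofReal (Real.exp ((ℓ:ℝ) * (t ^ 2 / 8) - t * ℓ * s)) := by
        apply ENNReal.ofReal_le_ofReal
        calc ∑ p, w p
            = ((∑ i, Real.exp (t * (f i - m))) / n) ^ ℓ * Real.exp (-(t * ℓ * s)) := by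
              simp only [hsplit]
              rw [← Finset.mul_sum, ← Finset.sum_mul, hprodsum, div_pow]
              ring
          _ ≤ (Real.exp (t ^ 2 / 8)) ^ ℓ * Real.exp (-(t * ℓ * s)) := by
              apply mul_le_mul_of_nonneg_right _ (Real.exp_pos _).le
              exact pow_le_pow_left₀
                (div_nonneg (Finset.sum_nonneg fun i _ => (Real.exp_pos _).le) hn.le) hbd ℓ
          _ = Real.exp ((ℓ:ℝ) * (t ^ 2 / 8) - t * ℓ * s) := by
              rw [← Real.exp_nat_mul, ← Real.exp_add]
              ring_nf

lemma laplace_aux_deriv (b : ℝ) (x : ℝ) :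
    HasDerivAt (fun x : ℝ => -(Real.exp (-x * b) / 2)) (b / 2 * Real.exp (-x * b)) x := by
  have h1 : HasDerivAt (fun x : ℝ => -x * b) (-b) x := by
    simpa using ((hasDerivAt_id x).neg.mul_const b)
  have h2 := ((h1.exp).div_const 2).neg
  exact h2.congr_deriv (by ring)

lemma laplace_aux_tendsto (b : ℝ) (hb : 0 < b) :
    Tendsto (fun x : ℝ => -(Real.exp (-x * b) / 2)) atTop (nhds 0) := by
  have h1 : Tendsto (fun x : ℝ => -x * b) atTop atBot := by
    have := tendsto_neg_atTop_atBot.comp (tendsto_id.atTop_mul_const hb)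
    refine this.congr fun x => by simp [Function.comp]
  have h2 := Real.tendsto_exp_atBot.comp h1
  have h3 := (h2.div_const 2).neg
  simpa using h3

lemma laplace_Ici (b c : ℝ) (hb : 0 < b) (hc : 0 ≤ c) :
    (volume.withDensity fun x : ℝ => ENNReal.ofReal (b / 2 * Real.exp (-|x| * b))) (Ici c)
      = ENNReal.ofReal (Real.exp (-c * b) / 2) := by
  have hmeas : Measurable fun x : ℝ => ENNReal.ofReal (b / 2 * Real.exp (-|x| * b)) := by
    fun_prop
  rw [withDensity_apply _ measurableSet_Ici]
  have hcong : ∀ᵐ x ∂(volume.restrict (Ici c)),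
      ENNReal.ofReal (b / 2 * Real.exp (-|x| * b))
        = ENNReal.ofReal (b / 2 * Real.exp (-x * b)) := by
    filter_upwards [ae_restrict_mem measurableSet_Ici] with x hx
    rw [abs_of_nonneg (le_trans hc hx)]
  rw [lintegral_congr_ae hcong]
  have hint : IntegrableOn (fun x : ℝ => b / 2 * Real.exp (-x * b)) (Ici c) := by
    rw [integrableOn_Ici_iff_integrableOn_Ioi]
    exact integrableOn_Ioi_deriv_of_nonneg' (fun x _ => laplace_aux_deriv b x)
      (fun x _ => by positivity) (laplace_aux_tendsto b hb)
  rw [← ofReal_integral_eq_lintegral_ofReal hint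
    (Filter.Eventually.of_forall fun x => by positivity)]
  congr 1
  rw [MeasureTheory.integral_Ici_eq_integral_Ioi]
  rw [integral_Ioi_of_hasDerivAt_of_nonneg' (fun x _ => laplace_aux_deriv b x)
    (fun x _ => by positivity) (laplace_aux_tendsto b hb)]
  ring

lemma laplace_Iic (b c : ℝ) (hb : 0 < b) (hc : 0 ≤ c) :
    (volume.withDensity fun x : ℝ => ENNReal.ofReal (b / 2 * Real.exp (-|x| * b))) (Iic (-c))
      = ENNReal.ofReal (Real.exp (-c * b) / 2) := by
  have hmeas : Measurable fun x : ℝ => ENNReal.ofReal (b / 2 * Real.exp (-|x| * b)) := by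
    fun_prop
  rw [withDensity_apply _ measurableSet_Iic]
  have hemb : MeasurableEmbedding (fun x : ℝ => -x) :=
    (Homeomorph.neg ℝ).measurableEmbedding
  have hpres : MeasurePreserving (fun x : ℝ => -x) volume volume :=
    Measure.measurePreserving_neg volume
  have h := hpres.setLIntegral_comp_preimage_emb hemb
    (fun x => ENNReal.ofReal (b / 2 * Real.exp (-|x| * b))) (Iic (-c))
  have hpre : (fun x : ℝ => -x) ⁻¹' (Iic (-c)) = Ici c := by
    ext x; simp
  rw [hpre] at h
  rw [← h]
  have : ∀ x : ℝ, ENNReal.ofReal (b / 2 * Real.exp (-|(-x)| * b))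
      = ENNReal.ofReal (b / 2 * Real.exp (-|x| * b)) := fun x => by rw [abs_neg]
  simp_rw [this]
  rw [← withDensity_apply _ measurableSet_Ici]
  exact laplace_Ici b c hb hc

lemma laplace_tail (b c : ℝ) (hb : 0 < b) (hc : 0 ≤ c) :
    (volume.withDensity fun x : ℝ => ENNReal.ofReal (b / 2 * Real.exp (-|x| * b)))
      {x : ℝ | c ≤ |x|} ≤ ENNReal.ofReal (Real.exp (-c * b)) := by
  have hsub : {x : ℝ | c ≤ |x|} ⊆ Iic (-c) ∪ Ici c := by
    intro x hx
    have hx' : c ≤ |x| := hx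
    rcases le_abs.1 hx' with h | h
    · exact Or.inr h
    · exact Or.inl (by simpa using neg_le_neg h : x ≤ -c)
  calc (volume.withDensity fun x : ℝ => ENNReal.ofReal (b / 2 * Real.exp (-|x| * b)))
        {x : ℝ | c ≤ |x|}
      ≤ _ := measure_mono hsub
    _ ≤ (volume.withDensity fun x : ℝ => ENNReal.ofReal (b / 2 * Real.exp (-|x| * b)))
          (Iic (-c))
        + (volume.withDensity fun x : ℝ => ENNReal.ofReal (b / 2 * Real.exp (-|x| * b)))
          (Ici c) := measure_union_le _ _
    _ = ENNReal.ofReal (Real.exp (-c * b)) := by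
        rw [laplace_Iic b c hb hc, laplace_Ici b c hb hc, ← ENNReal.ofReal_add
          (by positivity) (by positivity)]
        ring_nf

/-- Accuracy on the sample of the subsample-and-add-Laplace-noise mechanism for
a single statistical query: pick `ℓ` indices `I₁, …, I_ℓ` uniformly at random
with replacement from `{1, …, n}`, independently draw `Z ∼ Lap(1/(ℓ ε'))`
(whose density is `x ↦ ℓε'/2 · exp(−|x|·ℓε')`), and answer
`a = (1/ℓ)·Σ_j q(S_{I_j}) + Z`.  Then
`Pr[|a − q(S)| ≥ α] ≤ 2·exp(−α²ℓ/2) + exp(−αε'ℓ/2)`. -/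
theorem subsample_laplace_accuracy_on_sample
    {X : Type*} {n ℓ : ℕ} [NeZero n] (hℓ : 1 ≤ ℓ)
    (S : Fin n → X) (q : X → ℝ) (hq : ∀ x : X, q x ∈ Set.Icc (0 : ℝ) 1)
    (ε' α : ℝ) (hε' : 0 < ε') (hα0 : 0 < α) (hα1 : α ≤ 1)
    (μ : Measure ((Fin ℓ → Fin n) × ℝ))
    (hμ : μ = ((PMF.uniformOfFintype (Fin ℓ → Fin n)).toMeasure).prod
      (volume.withDensity fun x : ℝ =>
        ENNReal.ofReal ((ℓ : ℝ) * ε' / 2 * Real.exp (-|x| * ((ℓ : ℝ) * ε'))))) :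
    μ {p : (Fin ℓ → Fin n) × ℝ |
        α ≤ |(∑ j : Fin ℓ, q (S (p.1 j))) / (ℓ : ℝ) + p.2
              - (∑ j : Fin n, q (S j)) / (n : ℝ)|} ≤
      ENNReal.ofReal
        (2 * Real.exp (-α ^ 2 * (ℓ : ℝ) / 2) + Real.exp (-α * ε' * (ℓ : ℝ) / 2)) := by
  classical
  have hn : (0:ℝ) < n := by exact_mod_cast Nat.pos_of_ne_zero (NeZero.ne n)
  have hl : (0:ℝ) < ℓ := by exact_mod_cast hℓ
  set b : ℝ := (ℓ : ℝ) * ε' with hb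
  have hbpos : 0 < b := by positivity
  set μ₁ := (PMF.uniformOfFintype (Fin ℓ → Fin n)).toMeasure with hμ₁
  set ν := (volume.withDensity fun x : ℝ =>
    ENNReal.ofReal (b / 2 * Real.exp (-|x| * b))) with hν
  have hμ' : μ = μ₁.prod ν := by rw [hμ]
  set f : Fin n → ℝ := fun i => q (S i) with hf
  have hfIcc : ∀ i, f i ∈ Set.Icc (0:ℝ) 1 := fun i => hq (S i)
  set m : ℝ := (∑ i, f i) / n with hm
  set A : (Fin ℓ → Fin n) → ℝ := fun p => (∑ j, f (p j)) / ℓ with hA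
  set Ep : Set (Fin ℓ → Fin n) :=
    {p | α/2 ≤ (∑ j, f (p j)) / ℓ - (∑ i, f i) / n} with hEp
  set g : Fin n → ℝ := fun i => 1 - f i with hg
  have hgIcc : ∀ i, g i ∈ Set.Icc (0:ℝ) 1 := by
    intro i
    constructor
    · simp only [hg]; linarith [(hfIcc i).2]
    · simp only [hg]; linarith [(hfIcc i).1]
  set Em : Set (Fin ℓ → Fin n) :=
    {p | α/2 ≤ (∑ j, g (p j)) / ℓ - (∑ i, g i) / n} with hEm
  set E2 : Set ℝ := {x | α/2 ≤ |x|} with hE2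
  have hgsum : ∀ p₁ : Fin ℓ → Fin n,
      (∑ j, g (p₁ j)) / ℓ - (∑ i, g i) / n = m - A p₁ := by
    intro p₁
    simp only [hg, hm, hA, hf]
    rw [Finset.sum_sub_distrib, Finset.sum_sub_distrib]
    simp only [Finset.sum_const, Finset.card_univ, Fintype.card_fin, nsmul_eq_mul, mul_one]
    field_simp
    ring
  -- inclusion
  have hincl : {p : (Fin ℓ → Fin n) × ℝ |
        α ≤ |(∑ j : Fin ℓ, q (S (p.1 j))) / (ℓ : ℝ) + p.2
              - (∑ j : Fin n, q (S j)) / (n : ℝ)|}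
      ⊆ ((Ep ∪ Em) ×ˢ (univ : Set ℝ)) ∪ ((univ : Set (Fin ℓ → Fin n)) ×ˢ E2) := by
    intro p hp
    have hp' : α ≤ |A p.1 + p.2 - m| := hp
    by_contra hcon
    rw [Set.mem_union, not_or] at hcon
    obtain ⟨h1, h2⟩ := hcon
    have hp2 : |p.2| < α / 2 := by
      by_contra h
      exact h2 (Set.mem_prod.2 ⟨Set.mem_univ _, not_lt.1 h⟩)
    have hp1 : |A p.1 - m| < α / 2 := by
      by_contra h
      push_neg at h
      apply h1
      refine Set.mem_prod.2 ⟨?_, Set.mem_univ _⟩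
      rcases le_abs.1 h with h' | h'
      · exact Or.inl h'
      · refine Or.inr ?_
        show α/2 ≤ (∑ j, g (p.1 j)) / ℓ - (∑ i, g i) / n
        rw [hgsum p.1]
        linarith
    have habs : |A p.1 + p.2 - m| ≤ |A p.1 - m| + |p.2| := by
      have he : A p.1 + p.2 - m = (A p.1 - m) + p.2 := by ring
      rw [he]
      exact abs_add_le _ _
    linarith
  -- probability bounds
  have hEpbd : μ₁ Ep ≤ ENNReal.ofReal (Real.exp (-α^2 * (ℓ:ℝ) / 2)) := by
    have h := chernoff_one_sided (ℓ := ℓ) f hfIcc (α/2) (2*α) (by positivity)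
    have he : (ℓ:ℝ) * ((2*α) ^ 2 / 8) - (2*α) * ℓ * (α/2) = -α^2 * (ℓ:ℝ) / 2 := by ring
    rw [he] at h
    exact h
  have hEmbd : μ₁ Em ≤ ENNReal.ofReal (Real.exp (-α^2 * (ℓ:ℝ) / 2)) := by
    have h := chernoff_one_sided (ℓ := ℓ) g hgIcc (α/2) (2*α) (by positivity)
    have he : (ℓ:ℝ) * ((2*α) ^ 2 / 8) - (2*α) * ℓ * (α/2) = -α^2 * (ℓ:ℝ) / 2 := by ring
    rw [he] at h
    exact h
  have hE2bd : ν E2 ≤ ENNReal.ofReal (Real.exp (-α * ε' * (ℓ:ℝ) / 2)) := by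
    have h := laplace_tail b (α/2) hbpos (by positivity)
    have he : -(α/2) * b = -α * ε' * (ℓ:ℝ) / 2 := by rw [hb]; ring
    rw [he] at h
    exact h
  have hνuniv : ν (univ : Set ℝ) ≤ 1 := by
    have h := laplace_tail b 0 hbpos le_rfl
    have he : {x : ℝ | (0:ℝ) ≤ |x|} = univ := by
      ext x; simp [abs_nonneg]
    rw [he] at h
    calc ν univ ≤ ENNReal.ofReal (Real.exp (-0 * b)) := h
      _ = 1 := by norm_num
  have hμ₁univ : μ₁ (univ : Set (Fin ℓ → Fin n)) = 1 := measure_univ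
  -- assembly
  rw [hμ']
  calc μ₁.prod ν {p : (Fin ℓ → Fin n) × ℝ |
        α ≤ |(∑ j : Fin ℓ, q (S (p.1 j))) / (ℓ : ℝ) + p.2
              - (∑ j : Fin n, q (S j)) / (n : ℝ)|}
      ≤ μ₁.prod ν (((Ep ∪ Em) ×ˢ (univ : Set ℝ))
          ∪ ((univ : Set (Fin ℓ → Fin n)) ×ˢ E2)) := measure_mono hincl
    _ ≤ μ₁.prod ν ((Ep ∪ Em) ×ˢ (univ : Set ℝ))
        + μ₁.prod ν ((univ : Set (Fin ℓ → Fin n)) ×ˢ E2) := measure_union_le _ _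
    _ = μ₁ (Ep ∪ Em) * ν univ + μ₁ univ * ν E2 := by
        rw [Measure.prod_prod, Measure.prod_prod]
    _ ≤ μ₁ (Ep ∪ Em) * 1 + 1 * ν E2 :=
        add_le_add (mul_le_mul_right hνuniv _) (by rw [hμ₁univ])
    _ = μ₁ (Ep ∪ Em) + ν E2 := by rw [mul_one, one_mul]
    _ ≤ (μ₁ Ep + μ₁ Em) + ν E2 := by
        gcongr
        exact measure_union_le _ _
    _ ≤ (ENNReal.ofReal (Real.exp (-α^2 * (ℓ:ℝ) / 2))
          + ENNReal.ofReal (Real.exp (-α^2 * (ℓ:ℝ) / 2)))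
        + ENNReal.ofReal (Real.exp (-α * ε' * (ℓ:ℝ) / 2)) := by
        gcongr
    _ = ENNReal.ofReal
        (2 * Real.exp (-α ^ 2 * (ℓ : ℝ) / 2) + Real.exp (-α * ε' * (ℓ : ℝ) / 2)) := by
        rw [← ENNReal.ofReal_add (by positivity) (by positivity),
          ← ENNReal.ofReal_add (by positivity) (by positivity)]
        congr 1
        ring
end
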